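/- arXiv:1209.1760 — 2 statements merged into one kernel-verified Lean document; each statement's English description precedes it below -/
import Mathlib

section
/- Let A be an infinite alphabet and σ : Σ_A → Σ_A the shift map removing the first entry (with σ(0⃗) = 0⃗). Then σ is continuous at every point of Σ_A \ {0⃗} and discontinuous at 0⃗. Moreover, for each x ∈ Σ_A \ {0⃗} there is an open set U containing x such that σ(U) is open and σ|_U : U → σ(U) is a homeomorphism. -/
open Topology Filter Set

noncomputable section

/-- The set of finite and infinite sequences over the alphabet `A`, encoded as
functions `ℕ → Option A` which, once `none`, stay `none`. -/
def Sig (A : Type*) : Type _ :=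
  {f : ℕ → Option A // ∀ n, f n = none → f (n + 1) = none}

namespace Sig

variable {A : Type*}

/-- The empty sequence `0⃗`. -/
def nil : Sig A := ⟨fun _ => none, fun _ _ => rfl⟩

/-- The length of a sequence, an extended natural number. -/
def len (x : Sig A) : ℕ∞ := sInf {n : ℕ∞ | ∃ k : ℕ, n = (k : ℕ∞) ∧ x.1 k = none}

/-- The finite sequence determined by a list. -/
def ofList (w : List A) : Sig A :=
  ⟨fun n => w[n]?, fun n h => by
    rw [List.getElem?_eq_none_iff] at h ⊢
    omega⟩

/-- The shift map: delete the first entry. -/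
def shift (x : Sig A) : Sig A := ⟨fun n => x.1 (n + 1), fun n h => x.2 _ h⟩

/-- The cylinder set `Z(w)` of all sequences beginning with the finite word `w`. -/
def cyl (w : List A) : Set (Sig A) := {z | ∀ i < w.length, z.1 i = w[i]?}

/-- The generalized cylinder set `Z(w, F)`. -/
def cylF (w : List A) (F : Set A) : Set (Sig A) := cyl w \ ⋃ a ∈ F, cyl (w ++ [a])

/-- The space `X_A = A_∞^ℕ` where `A_∞` is the one-point compactification of the
discrete space `A`. -/
def XA (A : Type*) : Type _ := ℕ → OnePoint A

instance (A : Type*) : TopologicalSpace (XA A) :=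
  letI : TopologicalSpace A := ⊥
  inferInstanceAs (TopologicalSpace (ℕ → OnePoint A))

/-- View a point of `A_∞` as an `Option A` (they are definitionally equal). -/
def toOpt (y : OnePoint A) : Option A := y

open Classical in
/-- The quotient map `Q : X_A → Σ_A`, cutting a sequence over `A_∞` at the first
occurrence of `∞`. -/
def Q (x : XA A) : Sig A :=
  ⟨fun n => if ∃ i ≤ n, x i = OnePoint.infty then none else toOpt (x n), by
    intro n h
    dsimp only at h ⊢
    by_cases hex : ∃ i ≤ n, x i = OnePoint.infty
    · obtain ⟨i, hi, hxi⟩ := hex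
      exact if_pos ⟨i, hi.trans (Nat.le_succ n), hxi⟩
    · rw [if_neg hex] at h
      have : x n = OnePoint.infty := h
      exact absurd ⟨n, le_refl n, this⟩ hex⟩

/-- The quotient topology on `Σ_A` induced by `Q`. -/
instance (A : Type*) : TopologicalSpace (Sig A) :=
  TopologicalSpace.coinduced Q inferInstance

/-- `w` occurs as a subblock of the sequence `x`. -/
def IsSubblock (w : List A) (x : Sig A) : Prop :=
  ∃ k, ∀ i < w.length, x.1 (k + i) = w[i]?

/-- The set of blocks (finite subwords) of elements of `X`. -/
def blocks (X : Set (Sig A)) : Set (List A) := {w | ∃ x ∈ X, IsSubblock w x}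

/-- A shift space: closed, shift invariant, with the infinite-extension property. -/
def IsShiftSpace (X : Set (Sig A)) : Prop :=
  IsClosed X ∧ (∀ x ∈ X, shift x ∈ X) ∧
    ∀ w : List A, ofList w ∈ X → {a : A | (X ∩ cyl (w ++ [a])).Nonempty}.Infinite

/-- A shift space is row-finite if every symbol can be followed by only finitely
many symbols. -/
def RowFinite (X : Set (Sig A)) : Prop := ∀ a : A, {b : A | [a, b] ∈ blocks X}.Finite

/-- The set of infinite sequences avoiding all blocks from `F`. -/
def XFinf (F : Set (List A)) : Set (Sig A) :=
  {x | len x = ⊤ ∧ ∀ w ∈ F, ¬ IsSubblock w x}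

/-- The set of finite sequences with infinitely many extensions into `X_F^inf`. -/
def XFfin (F : Set (List A)) : Set (Sig A) :=
  {x | ∃ w : List A, x = ofList w ∧
    {a : A | (XFinf F ∩ cyl (w ++ [a])).Nonempty}.Infinite}

/-- The shift space `X_F` determined by the forbidden blocks `F`. -/
def XF (F : Set (List A)) : Set (Sig A) := XFinf F ∪ XFfin F

end Sig



namespace Sig

variable {A : Type*}

lemma isOpen_iff_Sig (s : Set (Sig A)) : IsOpen s ↔ IsOpen (Q ⁻¹' s) :=
  isOpen_coinduced

lemma continuous_Q : Continuous (Q : XA A → Sig A) :=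
  continuous_coinduced_rng

lemma eq_nil_of_first {x : Sig A} (h : x.1 0 = none) : x = nil := by
  apply Subtype.ext
  funext n
  induction n with
  | zero => exact h
  | succ m ih => exact x.2 m ih

lemma exists_first {x : Sig A} (h : x ≠ nil) : ∃ a, x.1 0 = some a := by
  cases hx : x.1 0 with
  | none => exact absurd (eq_nil_of_first hx) h
  | some a => exact ⟨a, rfl⟩

lemma shift_nil : shift (nil : Sig A) = nil := rfl

lemma mem_cyl_single {a : A} {y : Sig A} : y ∈ cyl [a] ↔ y.1 0 = some a := by
  constructor
  · intro h; simpa using h 0 (by simp)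
  · intro h i hi
    have : i = 0 := by simpa using hi
    subst this; simpa using h

open Classical in
lemma Q_apply (x : XA A) (n : ℕ) :
    (Q x).1 n = if ∃ i ≤ n, x i = OnePoint.infty then none else toOpt (x n) := rfl

lemma Q_eq_nil {x : XA A} (h : x 0 = OnePoint.infty) : Q x = nil := by
  apply eq_nil_of_first
  rw [Q_apply, if_pos ⟨0, le_refl 0, h⟩]

lemma toOpt_eq_some {y : OnePoint A} {a : A} : toOpt y = some a ↔ y = OnePoint.some a :=
  Iff.rfl

lemma Q_mem_cyl_single {a : A} {x : XA A} :
    Q x ∈ cyl [a] ↔ x 0 = OnePoint.some a := by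
  rw [mem_cyl_single, Q_apply]
  by_cases h : x 0 = OnePoint.infty
  · rw [if_pos ⟨0, le_rfl, h⟩]
    constructor
    · intro hn; exact absurd hn (by simp)
    · intro hx; rw [h] at hx; exact absurd hx.symm (OnePoint.coe_ne_infty a)
  · rw [if_neg (by rintro ⟨i, hi, hxi⟩; rw [Nat.le_zero.mp hi] at hxi; exact h hxi)]
    exact toOpt_eq_some

/-- `cons a y` prepends the letter `a`. -/
def cons (a : A) (y : Sig A) : Sig A :=
  ⟨fun n => Nat.casesOn n (some a) y.1, by
    intro n h
    cases n with
    | zero => exact absurd h (by simp)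
    | succ m => exact y.2 m h⟩

lemma shift_cons (a : A) (y : Sig A) : shift (cons a y) = y :=
  Subtype.ext (funext fun _ => rfl)

lemma cons_shift {a : A} {y : Sig A} (h : y.1 0 = some a) : cons a (shift y) = y := by
  apply Subtype.ext; funext n
  cases n with
  | zero => exact h.symm
  | succ m => rfl

lemma cons_mem_cyl (a : A) (y : Sig A) : cons a y ∈ cyl [a] := mem_cyl_single.2 rfl

/-- Shift on the covering space. -/
def shiftX (x : XA A) : XA A := fun n => x (n + 1)

/-- Prepending a letter on the covering space. -/
def consX (a : A) (x : XA A) : XA A := fun n => Nat.casesOn n (OnePoint.some a) x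

lemma isOpen_eval_coe (a : A) (k : ℕ) : IsOpen {x : XA A | x k = OnePoint.some a} := by
  letI : TopologicalSpace A := ⊥
  haveI : DiscreteTopology A := ⟨rfl⟩
  have h1 : IsOpen {y : OnePoint A | y = OnePoint.some a} := by
    rw [OnePoint.isOpen_iff_of_notMem (by exact fun h => OnePoint.infty_ne_coe a h)]
    exact isOpen_discrete _
  have h2 : Continuous (fun x : XA A => x k) := continuous_apply k
  exact h1.preimage h2

lemma isOpen_eval_ne (a : A) (k : ℕ) : IsOpen {x : XA A | x k ≠ OnePoint.some a} := by
  letI : TopologicalSpace A := ⊥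
  haveI : DiscreteTopology A := ⟨rfl⟩
  have h1 : IsOpen {y : OnePoint A | y ≠ OnePoint.some a} := by
    rw [OnePoint.isOpen_iff_of_mem (by exact fun h => OnePoint.infty_ne_coe a h)]
    have hpre : (((↑) : A → OnePoint A) ⁻¹' {y : OnePoint A | y ≠ OnePoint.some a})ᶜ = {a} := by
      ext b
      simp [OnePoint.coe_eq_coe, OnePoint.some, Option.some_inj]
      show ¬ ((b : OnePoint A) ≠ (a : OnePoint A)) ↔ b = a
      rw [not_not]; exact OnePoint.coe_eq_coe
    rw [hpre]
    exact ⟨isClosed_discrete _, (Set.finite_singleton a).isCompact⟩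
  have h2 : Continuous (fun x : XA A => x k) := continuous_apply k
  exact h1.preimage h2

lemma continuous_shiftX : Continuous (shiftX : XA A → XA A) := by
  letI : TopologicalSpace A := ⊥
  exact continuous_pi fun n => continuous_apply (n + 1)

lemma continuous_consX (a : A) : Continuous (consX a : XA A → XA A) := by
  letI : TopologicalSpace A := ⊥
  refine continuous_pi fun n => ?_
  cases n with
  | zero => exact continuous_const
  | succ m => exact continuous_apply m

lemma shift_Q {x : XA A} (h : x 0 ≠ OnePoint.infty) :
    shift (Q x) = Q (shiftX x) := by
  apply Subtype.ext; funext n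
  show (Q x).1 (n + 1) = _
  rw [Q_apply, Q_apply]
  by_cases hc : ∃ i ≤ n, shiftX x i = OnePoint.infty
  · obtain ⟨i, hi, hx⟩ := hc
    rw [if_pos ⟨i + 1, by omega, hx⟩, if_pos ⟨i, hi, hx⟩]
  · rw [if_neg ?_, if_neg hc]
    · rfl
    rintro ⟨i, hi, hx⟩
    cases i with
    | zero => exact h hx
    | succ j => exact hc ⟨j, by omega, hx⟩

lemma Q_consX (a : A) (x : XA A) : Q (consX a x) = cons a (Q x) := by
  apply Subtype.ext; funext n
  cases n with
  | zero =>
    rw [Q_apply, if_neg ?_]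
    · rfl
    rintro ⟨i, hi, hxi⟩
    rw [Nat.le_zero.mp hi] at hxi
    exact OnePoint.coe_ne_infty a hxi
  | succ m =>
    show _ = (Q x).1 m
    rw [Q_apply, Q_apply]
    by_cases h : ∃ i ≤ m, x i = OnePoint.infty
    · obtain ⟨i, hi, hx⟩ := h
      rw [if_pos ⟨i + 1, by omega, hx⟩, if_pos ⟨i, hi, hx⟩]
    · rw [if_neg ?_, if_neg h]
      · rfl
      rintro ⟨i, hi, hx⟩
      cases i with
      | zero => exact OnePoint.coe_ne_infty a hx
      | succ j => exact h ⟨j, by omega, hx⟩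

lemma continuous_cons (a : A) : Continuous (cons a : Sig A → Sig A) := by
  rw [continuous_def]
  intro s hs
  rw [isOpen_iff_Sig] at hs ⊢
  have heq : Q ⁻¹' (cons a ⁻¹' s) = consX a ⁻¹' (Q ⁻¹' s) := by
    ext z
    simp only [Set.mem_preimage, Q_consX]
  rw [heq]
  exact (continuous_consX a).isOpen_preimage _ hs

lemma continuousAt_shift {a : A} {x : Sig A} (hx : x.1 0 = some a) :
    ContinuousAt shift x := by
  rw [continuousAt_def]
  intro W hW
  obtain ⟨W', hW'sub, hW'open, hmemW'⟩ := mem_nhds_iff.mp hW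
  have hS : IsOpen (cyl [a] ∩ shift ⁻¹' W' : Set (Sig A)) := by
    rw [isOpen_iff_Sig]
    have heq : Q ⁻¹' (cyl [a] ∩ shift ⁻¹' W') =
        {z : XA A | z 0 = OnePoint.some a} ∩ shiftX ⁻¹' (Q ⁻¹' W') := by
      ext z
      simp only [Set.preimage_inter, Set.mem_inter_iff, Set.mem_preimage, Set.mem_setOf_eq,
        Q_mem_cyl_single]
      constructor
      · rintro ⟨h1, h2⟩
        refine ⟨h1, ?_⟩
        have hz0 : z 0 ≠ OnePoint.infty := by
          rw [h1]; exact OnePoint.coe_ne_infty a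
        rwa [← shift_Q hz0]
      · rintro ⟨h1, h2⟩
        refine ⟨h1, ?_⟩
        have hz0 : z 0 ≠ OnePoint.infty := by
          rw [h1]; exact OnePoint.coe_ne_infty a
        rwa [shift_Q hz0]
    rw [heq]
    exact (isOpen_eval_coe a 0).inter
      (continuous_shiftX.isOpen_preimage _ (continuous_Q.isOpen_preimage _ hW'open))
  have hxmem : x ∈ cyl [a] ∩ shift ⁻¹' W' := ⟨mem_cyl_single.2 hx, hmemW'⟩
  exact Filter.mem_of_superset (hS.mem_nhds hxmem) fun y hy => hW'sub hy.2

lemma image_shift_cyl (a : A) : shift '' (cyl [a] : Set (Sig A)) = Set.univ := by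
  ext z
  simp only [Set.mem_univ, iff_true, Set.mem_image]
  exact ⟨cons a z, cons_mem_cyl a z, shift_cons a z⟩

end Sig


/-- the shift map is continuous away from `0⃗`, discontinuous at `0⃗`,
and restricts to a homeomorphism from a suitable open neighborhood of each nonempty
sequence onto its open image. -/
theorem stmt7 (A : Type*) [Infinite A] :
    (∀ x : Sig A, x ≠ Sig.nil → ContinuousAt Sig.shift x) ∧
      ¬ ContinuousAt (Sig.shift : Sig A → Sig A) Sig.nil ∧
      ∀ x : Sig A, x ≠ Sig.nil →
        ∃ U : Set (Sig A), x ∈ U ∧ IsOpen U ∧ U ⊆ {y | y ≠ Sig.nil} ∧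
          IsOpen (Sig.shift '' U) ∧
          ∃ h : U ≃ₜ (Sig.shift '' U), ∀ u : U, (h u : Sig A) = Sig.shift u := by
  classical
  refine ⟨?_, ?_, ?_⟩
  · -- continuity away from nil
    intro x hx
    obtain ⟨a, ha⟩ := Sig.exists_first hx
    exact Sig.continuousAt_shift ha
  · -- discontinuity at nil
    intro hc
    obtain ⟨a⟩ := (inferInstance : Nonempty A)
    set W : Set (Sig A) := {y | y.1 0 ≠ some a} with hWdef
    have hWopen : IsOpen W := by
      rw [Sig.isOpen_iff_Sig]
      have heq : Sig.Q ⁻¹' W = {x : Sig.XA A | x 0 ≠ OnePoint.some a} := by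
        ext z
        simp only [Set.mem_preimage, hWdef, Set.mem_setOf_eq]
        exact not_congr (Sig.mem_cyl_single.symm.trans Sig.Q_mem_cyl_single)
      rw [heq]
      exact Sig.isOpen_eval_ne a 0
    have hnilW : (Sig.nil : Sig A) ∈ W := by
      exact fun h => Option.some_ne_none a (show (none : Option A) = some a from h).symm
    have h2 : Sig.shift ⁻¹' W ∈ 𝓝 (Sig.nil : Sig A) := by
      apply hc
      rw [Sig.shift_nil]
      exact hWopen.mem_nhds hnilW
    obtain ⟨S, hSsub, hSopen, hSnil⟩ := mem_nhds_iff.mp h2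
    -- the point (∞, a, ∞, ∞, ...) lies in Q ⁻¹' S
    set p : Sig.XA A := fun n => if n = 1 then OnePoint.some a else OnePoint.infty with hpdef
    have hQp : Sig.Q p ∈ S := by
      have : Sig.Q p = Sig.nil := Sig.Q_eq_nil (by simp [hpdef])
      rwa [this]
    have hopen' : IsOpen (Sig.Q ⁻¹' S) := (Sig.isOpen_iff_Sig S).mp hSopen
    letI : TopologicalSpace A := ⊥
    haveI : DiscreteTopology A := ⟨rfl⟩
    obtain ⟨I, u, hu, hsub⟩ := isOpen_pi_iff.mp hopen' p hQp
    have hc0 : ∃ c : A, (0 ∈ I → OnePoint.some c ∈ u 0) := by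
      by_cases h0 : 0 ∈ I
      · have hu0 := hu 0 h0
        have hmem : OnePoint.infty ∈ u 0 := by
          have := hu0.2
          simpa [hpdef] using this
        have h3 := (OnePoint.isOpen_iff_of_mem' hmem).mp hu0.1
        have hfin : ((((↑) : A → OnePoint A) ⁻¹' u 0)ᶜ).Finite :=
          isCompact_iff_finite.mp h3.1
        obtain ⟨c, hcmem⟩ := (hfin.infinite_compl).nonempty
        exact ⟨c, fun _ => Set.not_notMem.mp hcmem⟩
      · obtain ⟨c⟩ := (inferInstance : Nonempty A)
        exact ⟨c, fun h => absurd h h0⟩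
    obtain ⟨c, hc0⟩ := hc0
    set x : Sig.XA A := fun n =>
      if n = 0 then OnePoint.some c else if n = 1 then OnePoint.some a else OnePoint.infty
      with hxdef
    have hxpi : x ∈ (I : Set ℕ).pi u := by
      intro i hi
      by_cases h0 : i = 0
      · subst h0; simpa [hxdef] using hc0 hi
      · by_cases h1 : i = 1
        · subst h1
          have := (hu 1 hi).2
          simpa [hxdef, hpdef] using this
        · have := (hu i hi).2
          have hp : p i = OnePoint.infty := by simp [hpdef, h1]
          have hx : x i = OnePoint.infty := by simp [hxdef, h0, h1]
          rw [hp] at this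
          rwa [hx]
    have hQx : Sig.Q x ∈ S := hsub hxpi
    have hshift : Sig.shift (Sig.Q x) ∈ W := hSsub hQx
    have hval : (Sig.Q x).1 1 = some a := by
      rw [Sig.Q_apply, if_neg ?_]
      · rw [hxdef]; rfl
      rintro ⟨i, hi, hxi⟩
      interval_cases i
      · rw [hxdef] at hxi
        exact OnePoint.coe_ne_infty c (by simpa using hxi)
      · rw [hxdef] at hxi
        exact OnePoint.coe_ne_infty a (by simpa using hxi)
    exact hshift (by simpa [Sig.shift] using hval)
  · -- local homeomorphism
    intro x hx
    obtain ⟨a, ha⟩ := Sig.exists_first hx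
    refine ⟨Sig.cyl [a], Sig.mem_cyl_single.2 ha, ?_, ?_, ?_, ?_⟩
    · rw [Sig.isOpen_iff_Sig]
      have heq : Sig.Q ⁻¹' (Sig.cyl [a]) = {z : Sig.XA A | z 0 = OnePoint.some a} := by
        ext z; simp only [Set.mem_preimage, Set.mem_setOf_eq, Sig.Q_mem_cyl_single]
      rw [heq]
      exact Sig.isOpen_eval_coe a 0
    · intro y hy
      have h0 : y.1 0 = some a := Sig.mem_cyl_single.1 hy
      intro hnil
      rw [hnil] at h0
      exact Option.some_ne_none a (show (none : Option A) = some a from h0).symm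
    · rw [Sig.image_shift_cyl]
      exact isOpen_univ
    · refine ⟨{
        toFun := fun u => ⟨Sig.shift u.1, ⟨u.1, u.2, rfl⟩⟩
        invFun := fun v => ⟨Sig.cons a v.1, Sig.cons_mem_cyl a v.1⟩
        left_inv := fun u => Subtype.ext (Sig.cons_shift (Sig.mem_cyl_single.1 u.2))
        right_inv := fun v => Subtype.ext (Sig.shift_cons a v.1)
        continuous_toFun := by
          apply Continuous.subtype_mk
          have hco : ContinuousOn Sig.shift (Sig.cyl [a]) := fun y hy =>
            (Sig.continuousAt_shift (Sig.mem_cyl_single.1 hy)).continuousWithinAt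
          exact continuousOn_iff_continuous_restrict.mp hco
        continuous_invFun :=
          Continuous.subtype_mk ((Sig.continuous_cons a).comp continuous_subtype_val) _
      }, fun u => rfl⟩
end
end

section
/- If X ⊆ Σ_A is a shift space and x ∈ X has finite length, then for every finite subset F ⊆ A there exists an infinite sequence y ∈ Σ_A^inf with y₁ ∉ F such that xy ∈ X. In particular every finite sequence in X extends to an infinite sequence in X. -/
open Topology Filter Set

noncomputable section

namespace Sig

variable {A : Type*}

lemma stay_none (z : Sig A) {m k : ℕ} (h : z.1 m = none) (hmk : m ≤ k) : z.1 k = none := by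
  induction hmk with
  | refl => exact h
  | step _ ih => exact z.2 _ ih

lemma len_eq_top_iff (z : Sig A) : len z = ⊤ ↔ ∀ k, z.1 k ≠ none := by
  constructor
  · intro h k hk
    have hmem : (k : ℕ∞) ∈ {n : ℕ∞ | ∃ k : ℕ, n = (k : ℕ∞) ∧ z.1 k = none} := ⟨k, rfl, hk⟩
    have := sInf_le hmem
    rw [show sInf {n : ℕ∞ | ∃ k : ℕ, n = (k : ℕ∞) ∧ z.1 k = none} = len z from rfl, h] at this
    exact absurd (top_le_iff.mp this) (by simp)
  · intro h
    rw [len, show {n : ℕ∞ | ∃ k : ℕ, n = (k : ℕ∞) ∧ z.1 k = none} = ∅ from ?_, sInf_empty]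
    ext n
    simp only [Set.mem_setOf_eq, Set.mem_empty_iff_false, iff_false, not_exists]
    rintro k ⟨rfl, hk⟩
    exact h k hk

lemma exists_ofList (z : Sig A) (h : len z ≠ ⊤) : ∃ u : List A, z = ofList u := by
  classical
  have hex : ∃ k, z.1 k = none := by
    by_contra hc
    push_neg at hc
    exact h ((len_eq_top_iff z).mpr hc)
  set m := Nat.find hex with hm_def
  have hm : z.1 m = none := Nat.find_spec hex
  have hlt : ∀ i < m, z.1 i ≠ none := fun i hi => Nat.find_min hex hi
  refine ⟨List.ofFn (fun i : Fin m => (z.1 i).get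
    (Option.ne_none_iff_isSome.mp (hlt i i.2))), ?_⟩
  apply Subtype.ext
  funext n
  show z.1 n = (List.ofFn _)[n]?
  by_cases hn : n < m
  · rw [List.getElem?_ofFn, dif_pos hn]
    exact (Option.some_get _).symm
  · have h1 : z.1 n = none := stay_none z hm (le_of_not_gt hn)
    rw [h1, eq_comm, List.getElem?_eq_none_iff]
    simpa using le_of_not_gt hn

/-- Lift a sequence to `X_A`, viewing `none` as `∞`. -/
def lift (u : Sig A) : XA A := fun n => u.1 n

lemma Q_lift (u : Sig A) : Q (lift u) = u := by
  apply Subtype.ext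
  funext n
  simp only [Q]
  split_ifs with h
  · obtain ⟨i, hi, hinf⟩ := h
    exact (stay_none u (show u.1 i = none from hinf) hi).symm
  · rfl

lemma main (X : Set (Sig A)) (hX : IsShiftSpace X) (v : List A) (hv : ofList v ∈ X) :
    ∃ z ∈ X, len z = ⊤ ∧ z ∈ cyl v := by
  classical
  by_contra hcon
  push_neg at hcon
  -- Step: any finite word of `X` compatible with `v` extends strictly inside `X`.
  have step : ∀ u : List A, ofList u ∈ X → (∀ i < v.length, u[i]? = v[i]?) →
      v.length ≤ u.length →
      ∃ u' : List A, ofList u' ∈ X ∧ (∀ i < v.length, u'[i]? = v[i]?) ∧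
        u.length < u'.length ∧ ∀ i < u.length, u'[i]? = u[i]? := by
    intro u hu hagree hlen
    obtain ⟨a, z, hzX, hzcyl⟩ := (hX.2.2 u hu).nonempty
    have hcylu : ∀ i < u.length, z.1 i = u[i]? := by
      intro i hi
      rw [hzcyl i (by simp; omega), List.getElem?_append_left hi]
    have hfin : len z ≠ ⊤ := by
      intro htop
      refine hcon z hzX htop ?_
      intro i hi
      rw [hcylu i (by omega)]
      exact hagree i hi
    obtain ⟨u', rfl⟩ := exists_ofList z hfin
    have hua : u'[u.length]? = some a := by
      have := hzcyl u.length (by simp)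
      rw [show (ofList u').1 u.length = u'[u.length]? from rfl] at this
      rw [this]
      simp
    have hlen' : u.length < u'.length := by
      by_contra hc
      rw [List.getElem?_eq_none_iff.mpr (le_of_not_gt hc)] at hua
      exact Option.noConfusion rfl (heq_of_eq hua)
    refine ⟨u', hzX, ?_, hlen', fun i hi => hcylu i hi⟩
    intro i hi
    exact (hcylu i (by omega)).trans (hagree i hi)
  -- Build the increasing chain of words.
  set Inv : List A → Prop := fun u =>
    ofList u ∈ X ∧ (∀ i < v.length, u[i]? = v[i]?) ∧ v.length ≤ u.length with hInv_def
  have hInv0 : Inv v := ⟨hv, fun _ _ => rfl, le_refl _⟩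
  have key : ∀ p : {u // Inv u}, ∃ u' : List A, Inv u' ∧ p.1.length < u'.length ∧
      ∀ i < p.1.length, u'[i]? = p.1[i]? := by
    rintro ⟨u, hu1, hu2, hu3⟩
    obtain ⟨u', h1, h2, h3, h4⟩ := step u hu1 hu2 hu3
    exact ⟨u', ⟨h1, h2, hu3.trans h3.le⟩, h3, h4⟩
  choose nxt hnxt1 hnxt2 hnxt3 using key
  set f : ℕ → {u // Inv u} :=
    fun n => Nat.rec ⟨v, hInv0⟩ (fun _ p => ⟨nxt p, hnxt1 p⟩) n with hf_def
  have hfs : ∀ n, (f (n + 1)).1 = nxt (f n) := fun n => rfl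
  have hmono : ∀ n, (f n).1.length < (f (n + 1)).1.length := by
    intro n; rw [hfs]; exact hnxt2 (f n)
  have hglen : ∀ n, n ≤ (f n).1.length := by
    intro n
    induction n with
    | zero => exact Nat.zero_le _
    | succ n ih => have := hmono n; omega
  have hlenmono : ∀ n m, n ≤ m → (f n).1.length ≤ (f m).1.length := by
    intro n m h
    induction h with
    | refl => exact le_refl _
    | step _ ih => exact ih.trans (hmono _).le
  have hagree : ∀ m n, n ≤ m → ∀ i < (f n).1.length, (f m).1[i]? = (f n).1[i]? := by
    intro m n h
    induction h with
    | refl => intro i _; rfl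
    | @step k h ih =>
      intro i hi
      rw [hfs k, hnxt3 (f k) i (lt_of_lt_of_le hi (hlenmono n k h))]
      exact ih i hi
  -- Define the limit sequence `z`.
  have hk1 : ∀ k : ℕ, k < (f (k + 1)).1.length := fun k => lt_of_lt_of_le (by omega) (hglen (k + 1))
  set zf : ℕ → Option A := fun k => (f (k + 1)).1[k]? with hzf_def
  have zfsome : ∀ k, zf k ≠ none := by
    intro k hk
    have h2 : (f (k + 1)).1.length ≤ k := List.getElem?_eq_none_iff.mp hk
    exact absurd h2 (not_le.mpr (hk1 k))
  set z : Sig A := ⟨zf, fun n h => absurd h (zfsome n)⟩ with hz_def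
  have hz_eq : ∀ n k, k < (f n).1.length → z.1 k = (f n).1[k]? := by
    intro n k hk
    show zf k = (f n).1[k]?
    rcases le_or_gt n (k + 1) with h | h
    · exact hagree (k + 1) n h k hk
    · exact (hagree n (k + 1) h.le k (hk1 k)).symm
  have hztop : len z = ⊤ := (len_eq_top_iff z).mpr zfsome
  have hzcyl : z ∈ cyl v := by
    intro i hi
    rw [hz_eq (i + 1) i (hk1 i)]
    exact (f (i + 1)).2.2.1 i hi
  -- `z ∈ X` by closedness.
  have hQcont : Continuous (Q : XA A → Sig A) := continuous_coinduced_rng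
  have hclosed : IsClosed (Q ⁻¹' X) := hX.1.preimage hQcont
  have hmem : ∀ n : ℕ, lift (ofList (f n).1) ∈ Q ⁻¹' X := by
    intro n
    rw [Set.mem_preimage, Q_lift]
    exact (f n).2.1
  have htend : Tendsto (fun n => lift (ofList (f n).1)) atTop (nhds (lift z)) := by
    letI : TopologicalSpace A := ⊥
    refine tendsto_pi_nhds.mpr fun k => ?_
    apply Tendsto.congr' _ (tendsto_const_nhds (x := lift z k))
    filter_upwards [eventually_ge_atTop (k + 1)] with n hn
    show lift z k = lift (ofList (f n).1) k
    have h1 : z.1 k = (ofList (f n).1).1 k := by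
      show z.1 k = (f n).1[k]?
      exact hz_eq n k (lt_of_lt_of_le (hk1 k) (hlenmono (k + 1) n hn))
    exact congrArg (fun o : Option A => show OnePoint A from o) h1
  have hyz : lift z ∈ Q ⁻¹' X :=
    hclosed.mem_of_tendsto htend (Filter.Eventually.of_forall hmem)
  have hzX : z ∈ X := by
    rw [Set.mem_preimage, Q_lift] at hyz
    exact hyz
  exact hcon z hzX hztop hzcyl

end Sig

/-- in a shift space, every finite sequence extends to an infinite
sequence of the shift space whose next symbol avoids any prescribed finite set. -/
theorem stmt8 (A : Type*) (X : Set (Sig A)) (hX : Sig.IsShiftSpace X)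
    (w : List A) (hw : Sig.ofList w ∈ X) (F : Finset A) :
    ∃ z ∈ X, Sig.len z = ⊤ ∧ z ∈ Sig.cyl w ∧ ∀ a ∈ F, z.1 w.length ≠ some a := by
  classical
  obtain ⟨a, haS, haF⟩ : ∃ a, (X ∩ Sig.cyl (w ++ [a])).Nonempty ∧ a ∉ F := by
    obtain ⟨a, ha⟩ := ((hX.2.2 w hw).diff F.finite_toSet).nonempty
    exact ⟨a, ha.1, ha.2⟩
  obtain ⟨x, hxX, hxcyl⟩ := haS
  by_cases hfin : Sig.len x = ⊤
  · refine ⟨x, hxX, hfin, ?_, ?_⟩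
    · intro i hi
      rw [hxcyl i (by simp; omega), List.getElem?_append_left hi]
    · intro b hb hcontra
      have h1 := hxcyl w.length (by simp)
      rw [hcontra] at h1
      simp only [List.getElem?_concat_length] at h1
      obtain rfl : b = a := Option.some_injective _ h1
      exact haF hb
  · obtain ⟨u, rfl⟩ := Sig.exists_ofList x hfin
    have hucyl : ∀ i < w.length + 1, u[i]? = (w ++ [a])[i]? := by
      intro i hi
      exact (hxcyl i (by simpa using hi)).symm ▸ rfl
    have hua : u[w.length]? = some a := by
      rw [hucyl w.length (by omega)]
      simp
    have hulen : w.length < u.length := by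
      by_contra hc
      rw [List.getElem?_eq_none_iff.mpr (le_of_not_gt hc)] at hua
      exact Option.noConfusion rfl (heq_of_eq hua)
    obtain ⟨z, hzX, hztop, hzcyl⟩ := Sig.main X hX u hxX
    have hzu : ∀ i < u.length, z.1 i = u[i]? := hzcyl
    refine ⟨z, hzX, hztop, ?_, ?_⟩
    · intro i hi
      rw [hzu i (by omega), hucyl i (by omega), List.getElem?_append_left hi]
    · intro b hb hcontra
      rw [hzu w.length hulen, hua] at hcontra
      obtain rfl : a = b := Option.some_injective _ hcontra
      exact haF hb
end
end
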